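/- arXiv:0711.1623 — 2 statements merged into one kernel-verified Lean document; each statement's English description precedes it below -/
import Mathlib

section
/- If G is a finite cyclic group and M is a finite G-module, then the coinvariants M_G and the invariants M^G have the same cardinality. -/
/-- If `G` is a finite cyclic group and `M` is a finite `G`-module, then the coinvariants
`M_G = M / ⟨g•m - m⟩` and the invariants `M^G` have the same cardinality. -/
theorem card_coinvariants_eq_card_invariants
    (G M : Type*) [Group G] [Finite G] [IsCyclic G]
    [AddCommGroup M] [Finite M] [DistribMulAction G M] :
    Nat.card (M ⧸ AddSubgroup.closure {x : M | ∃ (g : G) (m : M), x = g • m - m}) =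
      Nat.card {m : M // ∀ g : G, g • m = m} := by
  obtain ⟨σ, hσ⟩ := IsCyclic.exists_monoid_generator (α := G)
  -- the map m ↦ σ•m - m
  let φ : M →+ M := (DistribMulAction.toAddMonoidHom M σ) - AddMonoidHom.id M
  have hφ : ∀ m : M, φ m = σ • m - m := fun m => rfl
  -- closure = range φ
  have hclos : AddSubgroup.closure {x : M | ∃ (g : G) (m : M), x = g • m - m} = φ.range := by
    apply le_antisymm
    · rw [AddSubgroup.closure_le]
      rintro x ⟨g, m, rfl⟩
      obtain ⟨n, rfl⟩ := hσ g
      induction n with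
      | zero => simp only [pow_zero, one_smul, sub_self]; exact φ.range.zero_mem
      | succ n ih =>
        have : σ ^ (n + 1) • m - m = φ (σ ^ n • m) + (σ ^ n • m - m) := by
          rw [hφ, pow_succ', mul_smul]
          abel
        rw [this]
        exact φ.range.add_mem ⟨_, rfl⟩ ih
    · rintro x ⟨m, rfl⟩
      exact AddSubgroup.subset_closure ⟨σ, m, (hφ m).symm⟩
  -- invariants = ker φ
  have hker : ∀ m : M, (∀ g : G, g • m = m) ↔ m ∈ φ.ker := by
    intro m
    rw [AddMonoidHom.mem_ker, hφ, sub_eq_zero]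
    constructor
    · intro h; exact h σ
    · intro h g
      obtain ⟨n, rfl⟩ := hσ g
      induction n with
      | zero => simp
      | succ n ih =>
        show σ ^ (n + 1) • m = m
        rw [pow_succ, mul_smul, h, ih]
  have e1 : Nat.card {m : M // ∀ g : G, g • m = m} = Nat.card φ.ker :=
    Nat.card_congr (Equiv.subtypeEquivRight hker)
  rw [hclos, e1]
  -- first isomorphism + Lagrange
  have h1 : Nat.card φ.ker * Nat.card φ.range = Nat.card M := by
    rw [← Nat.card_congr (QuotientAddGroup.quotientKerEquivRange φ).toEquiv]
    rw [mul_comm]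
    exact (AddSubgroup.card_eq_card_quotient_mul_card_addSubgroup φ.ker).symm
  have h2 : Nat.card (M ⧸ φ.range) * Nat.card φ.range = Nat.card M :=
    (AddSubgroup.card_eq_card_quotient_mul_card_addSubgroup φ.range).symm
  have hpos : 0 < Nat.card φ.range := Nat.card_pos
  exact Nat.eq_of_mul_eq_mul_right hpos (h2.trans h1.symm)
end

section
/- If G is a finite cyclic group and M is a finite G-module, then the G-invariants of the Pontryagin dual M^D have the same cardinality as M^G. -/
lemma card_zmod_hom (n : ℕ) (hn : 0 < n) :
    Nat.card (ZMod n →+ AddCircle (1 : ℚ)) = n := by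
  have hn' : (n : ℚ) ≠ 0 := Nat.cast_ne_zero.mpr hn.ne'
  have e1 : (ZMod n →+ AddCircle (1 : ℚ)) ≃ {c : AddCircle (1 : ℚ) // (n : ℤ) • c = 0} :=
    (ZMod.lift n).symm.trans <| Equiv.subtypeEquiv (zmultiplesHom _).symm (by
      intro f
      rw [show ((n:ℕ):ℤ) = (n:ℤ) • (1:ℤ) by simp, map_zsmul]
      simp [zmultiplesHom])
  rw [Nat.card_congr e1]
  -- now the torsion has card n
  set ψ : ZMod n →+ AddCircle (1 : ℚ) := ZMod.lift n ⟨zmultiplesHom _ (((1:ℚ)/n : ℚ) : AddCircle (1:ℚ)), by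
    simp only [zmultiplesHom_apply, ← AddCircle.coe_zsmul]
    rw [AddCircle.coe_eq_zero_iff]
    exact ⟨1, by simp [zsmul_eq_mul, hn']⟩⟩ with hψ
  have key : ∀ z : ℤ, ψ (z : ZMod n) = (((z : ℚ)/n : ℚ) : AddCircle (1:ℚ)) := by
    intro z
    rw [hψ, ZMod.lift_coe]
    simp only [zmultiplesHom_apply, ← AddCircle.coe_zsmul]
    rw [zsmul_eq_mul]
    ring
  have hinj : Function.Injective ψ := by
    rw [injective_iff_map_eq_zero]
    intro x hx
    obtain ⟨z, rfl⟩ := ZMod.intCast_surjective x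
    rw [key, AddCircle.coe_eq_zero_iff] at hx
    obtain ⟨t, ht⟩ := hx
    rw [ZMod.intCast_zmod_eq_zero_iff_dvd]
    refine ⟨t, ?_⟩
    have : (z : ℚ) = n * t := by
      field_simp at ht
      rw [zsmul_eq_mul, mul_one] at ht
      linarith [mul_comm (t:ℚ) n]
    exact_mod_cast this
  have e2 : ZMod n ≃ {c : AddCircle (1 : ℚ) // (n : ℤ) • c = 0} := by
    refine Equiv.ofBijective (fun k => ⟨ψ k, ?_⟩) ⟨fun a b hab => hinj (congrArg Subtype.val hab), ?_⟩
    · rw [← map_zsmul]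
      convert map_zero ψ
      simp [zsmul_eq_mul]
    · rintro ⟨c, hc⟩
      obtain ⟨q, rfl⟩ : ∃ q : ℚ, (q : AddCircle (1:ℚ)) = c := Quotient.exists_rep c
      rw [← AddCircle.coe_zsmul, AddCircle.coe_eq_zero_iff] at hc
      obtain ⟨t, ht⟩ := hc
      refine ⟨(t : ZMod n), Subtype.ext ?_⟩
      show ψ (t : ZMod n) = (q : AddCircle (1:ℚ))
      rw [key]
      congr 1
      have : (n : ℚ) * q = t := by
        simpa [zsmul_eq_mul] using ht.symm
      field_simp
      linarith
  rw [← Nat.card_congr e2, Nat.card_zmod]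

open scoped DirectSum in
lemma card_hom_addCircle (A : Type*) [AddCommGroup A] [Finite A] :
    Nat.card (A →+ AddCircle (1 : ℚ)) = Nat.card A := by
  obtain ⟨ι, hι, n, hn, ⟨e⟩⟩ := AddCommGroup.equiv_directSum_zmod_of_finite' A
  classical
  have e1 : (A →+ AddCircle (1 : ℚ)) ≃ ((⨁ i, ZMod (n i)) →+ AddCircle (1 : ℚ)) :=
    AddEquiv.addMonoidHomCongrLeftEquiv e
  have e2 : ((⨁ i, ZMod (n i)) →+ AddCircle (1 : ℚ)) ≃ (∀ i, ZMod (n i) →+ AddCircle (1 : ℚ)) :=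
    (DFinsupp.liftAddHom (β := fun i => ZMod (n i))).symm.toEquiv
  rw [Nat.card_congr (e1.trans e2), Nat.card_congr e.toEquiv, Nat.card_pi]
  have h2 : Nat.card (⨁ i, ZMod (n i)) = ∏ i, Nat.card (ZMod (n i)) :=
    (Nat.card_congr (DFinsupp.equivFunOnFintype)).trans Nat.card_pi
  rw [h2]
  exact Finset.prod_congr rfl fun i _ => by
    rw [card_zmod_hom (n i) (Nat.lt_of_lt_of_le Nat.zero_lt_one (hn i).le), Nat.card_zmod]

/-- If `G` is a finite cyclic group and `M` is a finite `G`-module, then the `G`-invariants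
of the Pontryagin dual `M^D = Hom(M, ℚ/ℤ)` (with action `(g•f)(m) = f(g⁻¹ m)`, so that
invariance means `f (g • m) = f m`) have the same cardinality as `M^G`. -/
theorem card_dual_invariants_eq_card_invariants
    (G M : Type*) [Group G] [Finite G] [IsCyclic G]
    [AddCommGroup M] [Finite M] [DistribMulAction G M] :
    Nat.card {f : M →+ AddCircle (1 : ℚ) // ∀ (g : G) (m : M), f (g • m) = f m} =
      Nat.card {m : M // ∀ g : G, g • m = m} := by
  obtain ⟨σ, hσ⟩ := IsCyclic.exists_generator (α := G)
  let φ : M →+ M := (DistribMulAction.toAddMonoidHom M σ) - AddMonoidHom.id M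
  have hφ : ∀ m, φ m = σ • m - m := fun m => rfl
  set N : AddSubgroup M := φ.range with hN
  -- RHS ≃ ker φ
  have eR : {m : M // ∀ g : G, g • m = m} ≃ φ.ker := Equiv.subtypeEquivRight (by
    intro m
    constructor
    · intro h
      show φ m = 0
      rw [hφ, h σ, sub_self]
    · intro h g
      have hs : σ ∈ MulAction.stabilizer G m := by
        have h' : φ m = 0 := h
        rw [hφ, sub_eq_zero] at h'
        exact h'
      exact (Subgroup.zpowers_le.mpr hs) (hσ g))
  -- LHS ≃ homs vanishing on N
  have eL1 : {f : M →+ AddCircle (1 : ℚ) // ∀ (g : G) (m : M), f (g • m) = f m} ≃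
      {f : M →+ AddCircle (1 : ℚ) // ∀ m, f (φ m) = 0} := Equiv.subtypeEquivRight (by
    intro f
    constructor
    · intro h m
      rw [hφ, map_sub, h σ m, sub_self]
    · intro h g m
      have hf : ∀ m, f (σ • m) = f m := by
        intro m
        have := h m
        rw [hφ, map_sub, sub_eq_zero] at this
        exact this
      have hinv : ∀ m, f (σ⁻¹ • m) = f m := by
        intro m
        have := hf (σ⁻¹ • m)
        rw [smul_inv_smul] at this
        exact this.symm
      have key : ∀ k : ℤ, ∀ m : M, f (σ ^ k • m) = f m := by
        intro k
        induction k using Int.induction_on with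
        | zero => simp
        | succ k ih =>
          intro m
          rw [show σ ^ ((k : ℤ) + 1) = σ ^ (k : ℤ) * σ by rw [zpow_add_one], mul_smul, ih, hf]
        | pred k ih =>
          intro m
          rw [show σ ^ (-(k : ℤ) - 1) = σ ^ (-(k : ℤ)) * σ⁻¹ by rw [zpow_sub_one], mul_smul,
            ih, hinv]
      obtain ⟨k, rfl⟩ := hσ g
      exact key k m)
  have eL2 : ((M ⧸ N) →+ AddCircle (1 : ℚ)) ≃
      {f : M →+ AddCircle (1 : ℚ) // ∀ m, f (φ m) = 0} :=
    { toFun := fun F => ⟨F.comp (QuotientAddGroup.mk' N), fun m => by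
        have : ((φ m : M) : M ⧸ N) = 0 := (QuotientAddGroup.eq_zero_iff _).mpr ⟨m, rfl⟩
        simp [this]⟩
      invFun := fun f => QuotientAddGroup.lift N f.1 (by
        rintro x ⟨m, rfl⟩
        exact f.2 m)
      left_inv := fun F => by
        ext x
        rfl
      right_inv := fun f => Subtype.ext (by ext m; rfl) }
  rw [Nat.card_congr eR, Nat.card_congr (eL1.trans eL2.symm),
    card_hom_addCircle (M ⧸ N)]
  -- counting
  have h1 : Nat.card M = Nat.card (M ⧸ N) * Nat.card N :=
    AddSubgroup.card_eq_card_quotient_mul_card_addSubgroup N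
  have h2 : Nat.card M = Nat.card (M ⧸ φ.ker) * Nat.card φ.ker :=
    AddSubgroup.card_eq_card_quotient_mul_card_addSubgroup φ.ker
  have h3 : Nat.card (M ⧸ φ.ker) = Nat.card N :=
    Nat.card_congr (QuotientAddGroup.quotientKerEquivRange φ).toEquiv
  have hNpos : 0 < Nat.card N := Nat.card_pos
  rw [h3] at h2
  rw [h1] at h2
  exact Nat.eq_of_mul_eq_mul_left hNpos (by linarith [h2])
end
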